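/- arXiv:1609.02711 — 7 statements merged into one kernel-verified Lean document; each statement's English description precedes it below -/
import Mathlib

section
/- Let X ∈ ℝ^{n×n} be symmetric negative definite and H ∈ ℝ^{p×n}. If X + Hᵀ H is negative definite, then I_p + H X⁻¹ Hᵀ is symmetric positive definite. -/
/-!
Put `D = -X`. The block matrix `[[1, H], [Hᵀ, D]]` has Schur complement `D - HᵀH = -(X + HᵀH)`
with respect to its upper-left block and `1 - H D⁻¹ Hᵀ = 1 + H X⁻¹ Hᵀ` with respect to its
lower-right block. Either complement is positive semidefinite iff the block matrix is, and the
determinant of the block matrix is `det D` times that of either complement, so one complement is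
invertible iff the other is. A positive semidefinite matrix is positive definite iff it is
invertible.
-/

open Matrix
open scoped ComplexOrder

namespace Matrix

variable {m n 𝕜 : Type*} [Fintype m] [Fintype n] [DecidableEq m] [DecidableEq n] [RCLike 𝕜]

theorem posDef_iff_posSemidef_and_isUnit_det {S : Matrix n n 𝕜} :
    S.PosDef ↔ S.PosSemidef ∧ IsUnit S.det := by
  rw [← isUnit_iff_isUnit_det]
  exact ⟨fun h => ⟨h.posSemidef, h.isUnit⟩, fun ⟨hS, hu⟩ => hS.posDef_iff_isUnit.mpr hu⟩

theorem PosDef.sub_mul_inv_mul_conjTranspose_iff {A : Matrix m m 𝕜} {D : Matrix n n 𝕜}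
    (hA : A.PosDef) (hD : D.PosDef) (B : Matrix m n 𝕜) :
    (A - B * D⁻¹ * Bᴴ).PosDef ↔ (D - Bᴴ * A⁻¹ * B).PosDef := by
  let := hA.isUnit.invertible
  let := hD.isUnit.invertible
  have semidef_iff : (A - B * D⁻¹ * Bᴴ).PosSemidef ↔ (D - Bᴴ * A⁻¹ * B).PosSemidef :=
    (PosDef.fromBlocks₂₂ A B hD).symm.trans (PosDef.fromBlocks₁₁ B D hA)
  have det_eq : A.det * (D - Bᴴ * A⁻¹ * B).det = D.det * (A - B * D⁻¹ * Bᴴ).det := by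
    rw [← invOf_eq_nonsing_inv, ← invOf_eq_nonsing_inv, ← det_fromBlocks₁₁, det_fromBlocks₂₂]
  have isUnit_det_iff : IsUnit (A - B * D⁻¹ * Bᴴ).det ↔ IsUnit (D - Bᴴ * A⁻¹ * B).det := by
    have h := congrArg IsUnit det_eq
    rwa [IsUnit.mul_iff, IsUnit.mul_iff, eq_iff_iff,
      and_iff_right ((isUnit_iff_isUnit_det A).mp hA.isUnit),
      and_iff_right ((isUnit_iff_isUnit_det D).mp hD.isUnit), iff_comm] at h
  rw [posDef_iff_posSemidef_and_isUnit_det, posDef_iff_posSemidef_and_isUnit_det, semidef_iff,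
    isUnit_det_iff]

end Matrix

theorem one_add_HXinvHt_posdef_general (n p : ℕ)
    (X : Matrix (Fin n) (Fin n) ℝ) (H : Matrix (Fin p) (Fin n) ℝ)
    (hXneg : (-X).PosDef)
    (hneg : (-(X + Hᵀ * H)).PosDef) :
    (1 + H * X⁻¹ * Hᵀ).IsSymm ∧ (1 + H * X⁻¹ * Hᵀ).PosDef := by
  have hX_unit : IsUnit X := (IsUnit.neg_iff X).mp hXneg.isUnit
  have inv_neg : (-X)⁻¹ = -X⁻¹ :=
    inv_eq_left_inv <| by rw [neg_mul_neg, nonsing_inv_mul _ ((isUnit_iff_isUnit_det X).mp hX_unit)]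
  have hpos : (1 + H * X⁻¹ * Hᵀ).PosDef := by
    have schur := PosDef.sub_mul_inv_mul_conjTranspose_iff PosDef.one hXneg H
    rw [conjTranspose_eq_transpose_of_trivial, inv_one, Matrix.mul_one, inv_neg, Matrix.mul_neg,
      Matrix.neg_mul, sub_neg_eq_add, ← neg_add'] at schur
    exact schur.mpr hneg
  exact ⟨isHermitian_iff_isSymm.mp hpos.isHermitian, hpos⟩

/-- If X is symmetric negative definite and X + Hᵀ H is negative definite, then
I + H X⁻¹ Hᵀ is symmetric positive definite. -/
theorem one_add_HXinvHt_posdef (n p : ℕ)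
    (X : Matrix (Fin n) (Fin n) ℝ) (H : Matrix (Fin p) (Fin n) ℝ)
    (hX : X.IsSymm) (hXneg : (-X).PosDef)
    (hneg : (-(X + Hᵀ * H)).PosDef) :
    (1 + H * X⁻¹ * Hᵀ).IsSymm ∧ (1 + H * X⁻¹ * Hᵀ).PosDef :=
  one_add_HXinvHt_posdef_general n p X H hXneg hneg
end

section
/- Let Γ, X ∈ ℝ^{n×n} with X symmetric invertible, Γ invertible, and suppose Γᵀ X Γ = X + Hᵀ H for some H ∈ ℝ^{p×n} with I + H X⁻¹ Hᵀ invertible. Set U = (I + H X⁻¹ Hᵀ)^{1/2} (any matrix with Uᵀ U = U Uᵀ = I + H X⁻¹ Hᵀ, U symmetric), and G = Γ X⁻¹ Hᵀ U⁻¹. Then Hᵀ U = Γᵀ X G and Uᵀ U = I + Gᵀ X G. -/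
open Matrix

/-- Under the Stein relation Γᵀ X Γ = X + Hᵀ H, with U a symmetric invertible
square root of I + H X⁻¹ Hᵀ and G = Γ X⁻¹ Hᵀ U⁻¹, one has Hᵀ U = Γᵀ X G and
Uᵀ U = I + Gᵀ X G. -/
theorem allpass_relations (n p : ℕ)
    (Γ X : Matrix (Fin n) (Fin n) ℝ) (H : Matrix (Fin p) (Fin n) ℝ)
    (U : Matrix (Fin p) (Fin p) ℝ)
    (hX : X.IsSymm) (hXu : IsUnit X.det) (hΓu : IsUnit Γ.det)
    (hstein : Γᵀ * X * Γ = X + Hᵀ * H)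
    (hUsym : U.IsSymm) (hUu : IsUnit U.det)
    (hUsq : Uᵀ * U = 1 + H * X⁻¹ * Hᵀ) (hUsq' : U * Uᵀ = 1 + H * X⁻¹ * Hᵀ) :
    Hᵀ * U = Γᵀ * X * (Γ * X⁻¹ * Hᵀ * U⁻¹) ∧
    Uᵀ * U = 1 + (Γ * X⁻¹ * Hᵀ * U⁻¹)ᵀ * X * (Γ * X⁻¹ * Hᵀ * U⁻¹) := by
  have hUT : Uᵀ = U := hUsym
  have hXi : X * X⁻¹ = 1 := mul_nonsing_inv _ hXu
  have hXi' : X⁻¹ * X = 1 := nonsing_inv_mul _ hXu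
  have hUi : U * U⁻¹ = 1 := mul_nonsing_inv _ hUu
  have hUi' : U⁻¹ * U = 1 := nonsing_inv_mul _ hUu
  have hXinvT : X⁻¹ᵀ = X⁻¹ := by rw [transpose_nonsing_inv, hX]
  have hUinvT : U⁻¹ᵀ = U⁻¹ := by rw [transpose_nonsing_inv, hUT]
  have hUsqU : U * U = 1 + H * X⁻¹ * Hᵀ := by have h := hUsq; rwa [hUT] at h
  -- key identity
  have hkey : Γᵀ * X * (Γ * X⁻¹ * Hᵀ) = Hᵀ * (U * U) := by
    have e1 : Γᵀ * X * (Γ * X⁻¹ * Hᵀ) = Γᵀ * X * Γ * (X⁻¹ * Hᵀ) := by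
      simp only [Matrix.mul_assoc]
    rw [e1, hstein, Matrix.add_mul, ← Matrix.mul_assoc X, hXi, Matrix.one_mul,
      hUsqU, Matrix.mul_add, Matrix.mul_one]
    simp only [Matrix.mul_assoc]
  have h1 : Hᵀ * U = Γᵀ * X * (Γ * X⁻¹ * Hᵀ * U⁻¹) := by
    have e2 : Γᵀ * X * (Γ * X⁻¹ * Hᵀ * U⁻¹) = Γᵀ * X * (Γ * X⁻¹ * Hᵀ) * U⁻¹ := by
      simp only [Matrix.mul_assoc]
    rw [e2, hkey, Matrix.mul_assoc, Matrix.mul_assoc, hUi, Matrix.mul_one]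
  refine ⟨h1, ?_⟩
  have hGT : (Γ * X⁻¹ * Hᵀ * U⁻¹)ᵀ = U⁻¹ * H * X⁻¹ * Γᵀ := by
    simp [transpose_mul, hXinvT, hUinvT, Matrix.mul_assoc]
  rw [hGT]
  have e3 : U⁻¹ * H * X⁻¹ * Γᵀ * X * (Γ * X⁻¹ * Hᵀ * U⁻¹)
      = U⁻¹ * (H * X⁻¹) * (Γᵀ * X * (Γ * X⁻¹ * Hᵀ)) * U⁻¹ := by
    simp only [Matrix.mul_assoc]
  rw [e3, hkey]
  have e4 : U⁻¹ * (H * X⁻¹) * (Hᵀ * (U * U)) * U⁻¹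
      = U⁻¹ * ((H * X⁻¹ * Hᵀ) * U) * (U * U⁻¹) := by
    simp only [Matrix.mul_assoc]
  rw [e4, hUi, Matrix.mul_one]
  have hS : H * X⁻¹ * Hᵀ = U * U - 1 := by rw [hUsqU]; abel
  rw [hS, Matrix.sub_mul, Matrix.one_mul, Matrix.mul_sub, hUi',
    show U * U * U = U * (U * U) by simp only [Matrix.mul_assoc],
    ← Matrix.mul_assoc, hUi', Matrix.one_mul, hUT]
  abel
end

section
/- Under the hypotheses Γᵀ X Γ = X + Hᵀ H with X symmetric invertible and Γ invertible, setting G = Γ X⁻¹ Hᵀ U⁻¹ where U Uᵀ = I + H X⁻¹ Hᵀ is invertible, one has G Gᵀ = Γ X⁻¹ Γᵀ − X⁻¹. -/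
open Matrix

/-- Under the Stein relation Γᵀ X Γ = X + Hᵀ H, with U Uᵀ = Uᵀ U = I + H X⁻¹ Hᵀ
invertible and G = Γ X⁻¹ Hᵀ U⁻¹, one has G Gᵀ = Γ X⁻¹ Γᵀ − X⁻¹. -/
theorem GGt_formula (n p : ℕ)
    (Γ X : Matrix (Fin n) (Fin n) ℝ) (H : Matrix (Fin p) (Fin n) ℝ)
    (U : Matrix (Fin p) (Fin p) ℝ)
    (hX : X.IsSymm) (hXu : IsUnit X.det) (hΓu : IsUnit Γ.det)
    (hstein : Γᵀ * X * Γ = X + Hᵀ * H)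
    (hUu : IsUnit U.det)
    (hUsq : U * Uᵀ = 1 + H * X⁻¹ * Hᵀ) (hUsq' : Uᵀ * U = 1 + H * X⁻¹ * Hᵀ) :
    (Γ * X⁻¹ * Hᵀ * U⁻¹) * (Γ * X⁻¹ * Hᵀ * U⁻¹)ᵀ = Γ * X⁻¹ * Γᵀ - X⁻¹ := by
  have hXi : X * X⁻¹ = 1 := mul_nonsing_inv _ hXu
  have hXi' : X⁻¹ * X = 1 := nonsing_inv_mul _ hXu
  have hXsym : X⁻¹ᵀ = X⁻¹ := by rw [transpose_nonsing_inv, hX.eq]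
  have hSu : IsUnit (X + Hᵀ * H).det := by
    rw [← hstein, det_mul, det_mul, det_transpose]
    exact (hΓu.mul hXu).mul hΓu
  have hMu : IsUnit (1 + H * X⁻¹ * Hᵀ).det := by
    rw [← hUsq', det_mul, det_transpose]
    exact hUu.mul hUu
  -- key identity: (1 + H X⁻¹ Hᵀ) H = H X⁻¹ (X + Hᵀ H)
  have key1 : (1 + H * X⁻¹ * Hᵀ) * H = H * X⁻¹ * (X + Hᵀ * H) := by
    rw [Matrix.add_mul, Matrix.one_mul, Matrix.mul_add, Matrix.mul_assoc H X⁻¹ X, hXi',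
      Matrix.mul_one, Matrix.mul_assoc (H * X⁻¹) Hᵀ H]
  -- hence M⁻¹ (H X⁻¹) = H S⁻¹
  have key0 : (1 + H * X⁻¹ * Hᵀ) * (H * (X + Hᵀ * H)⁻¹) = H * X⁻¹ := by
    rw [← Matrix.mul_assoc, key1, Matrix.mul_nonsing_inv_cancel_right _ _ hSu]
  have key2 : (1 + H * X⁻¹ * Hᵀ)⁻¹ * (H * X⁻¹) = H * (X + Hᵀ * H)⁻¹ := by
    have h := Matrix.nonsing_inv_mul_cancel_left (1 + H * X⁻¹ * Hᵀ)
      (H * (X + Hᵀ * H)⁻¹) hMu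
    rwa [key0] at h
  -- Woodbury-style identity
  have key3 : X⁻¹ * Hᵀ * ((1 + H * X⁻¹ * Hᵀ)⁻¹ * (H * X⁻¹))
      = X⁻¹ - (X + Hᵀ * H)⁻¹ := by
    rw [key2, ← Matrix.mul_assoc, Matrix.mul_assoc X⁻¹ Hᵀ H,
      show X⁻¹ * (Hᵀ * H) = X⁻¹ * (X + Hᵀ * H) - 1 by
        rw [Matrix.mul_add, hXi', add_sub_cancel_left],
      Matrix.sub_mul, Matrix.one_mul, Matrix.mul_assoc, Matrix.mul_nonsing_inv _ hSu,
      Matrix.mul_one]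
  -- S⁻¹ in terms of Γ, X
  have hSinv : (X + Hᵀ * H)⁻¹ = Γ⁻¹ * (X⁻¹ * Γᵀ⁻¹) := by
    rw [← hstein, Matrix.mul_inv_rev, Matrix.mul_inv_rev]
  have hΓi : Γ * Γ⁻¹ = 1 := mul_nonsing_inv _ hΓu
  have hΓti : Γᵀ⁻¹ * Γᵀ = 1 := nonsing_inv_mul _ (by rwa [det_transpose])
  have hUinv : U⁻¹ * (U⁻¹)ᵀ = (1 + H * X⁻¹ * Hᵀ)⁻¹ := by
    rw [transpose_nonsing_inv, ← Matrix.mul_inv_rev, hUsq']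
  calc (Γ * X⁻¹ * Hᵀ * U⁻¹) * (Γ * X⁻¹ * Hᵀ * U⁻¹)ᵀ
      = Γ * (X⁻¹ * Hᵀ * ((U⁻¹ * (U⁻¹)ᵀ) * (H * X⁻¹))) * Γᵀ := by
        simp only [transpose_mul, hXsym, transpose_transpose, Matrix.mul_assoc]
    _ = Γ * (X⁻¹ * Hᵀ * ((1 + H * X⁻¹ * Hᵀ)⁻¹ * (H * X⁻¹))) * Γᵀ := by
        rw [hUinv]
    _ = Γ * (X⁻¹ - Γ⁻¹ * (X⁻¹ * Γᵀ⁻¹)) * Γᵀ := by rw [key3, hSinv]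
    _ = Γ * X⁻¹ * Γᵀ - Γ * (Γ⁻¹ * (X⁻¹ * Γᵀ⁻¹)) * Γᵀ := by
        rw [Matrix.mul_sub, Matrix.sub_mul]
    _ = Γ * X⁻¹ * Γᵀ - X⁻¹ := by
        rw [← Matrix.mul_assoc Γ Γ⁻¹, hΓi, Matrix.one_mul,
          Matrix.mul_assoc X⁻¹ Γᵀ⁻¹ Γᵀ, hΓti, Matrix.mul_one]
end

section
/- Let A, Γ, X ∈ ℝ^{n×n} with Γ invertible, X symmetric invertible, H ∈ ℝ^{p×n}, D ∈ ℝ^{p×p} invertible, and suppose Γᵀ X Γ = X + Hᵀ H where H = D⁻¹ C and Γ = A − B D⁻¹ C for B ∈ ℝ^{n×p}, C ∈ ℝ^{p×n}. Define U = (I + H X⁻¹ Hᵀ)^{1/2} (symmetric invertible), B₊ = B U + Γ X⁻¹ Hᵀ U⁻¹, D₊ = D U. Then the matrix Γ₊ := A − B₊ D₊⁻¹ C satisfies Γ₊ = X⁻¹ Γ^{-⊤} X. -/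
open Matrix

/-- The zero matrix of W₊: with Γ = A − B D⁻¹ C, H = D⁻¹ C, X a symmetric
invertible solution of the Stein equation, U the symmetric positive definite
square root of I + H X⁻¹ Hᵀ, B₊ = B U + Γ X⁻¹ Hᵀ U⁻¹ and D₊ = D U, one has
A − B₊ D₊⁻¹ C = X⁻¹ Γ^{-⊤} X. -/
theorem zero_matrix_Wplus (n p : ℕ)
    (A : Matrix (Fin n) (Fin n) ℝ) (B : Matrix (Fin n) (Fin p) ℝ)
    (C : Matrix (Fin p) (Fin n) ℝ) (D : Matrix (Fin p) (Fin p) ℝ)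
    (X : Matrix (Fin n) (Fin n) ℝ) (U : Matrix (Fin p) (Fin p) ℝ)
    (hD : IsUnit D.det)
    (hΓu : IsUnit (A - B * D⁻¹ * C).det)
    (hX : X.IsSymm) (hXu : IsUnit X.det)
    (hstein : (A - B * D⁻¹ * C)ᵀ * X * (A - B * D⁻¹ * C)
        = X + (D⁻¹ * C)ᵀ * (D⁻¹ * C))
    (hUsym : U.IsSymm) (hUpos : U.PosDef)
    (hUsq : U * U = 1 + (D⁻¹ * C) * X⁻¹ * (D⁻¹ * C)ᵀ) :
    A - (B * U + (A - B * D⁻¹ * C) * X⁻¹ * (D⁻¹ * C)ᵀ * U⁻¹) * (D * U)⁻¹ * C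
      = X⁻¹ * ((A - B * D⁻¹ * C)ᵀ)⁻¹ * X := by
  set Γ := A - B * D⁻¹ * C with hΓdef
  set H := D⁻¹ * C with hHdef
  have hU : IsUnit U.det := hUpos.det_pos.ne'.isUnit
  have hM : IsUnit (U * U).det := by rw [Matrix.det_mul]; exact hU.mul hU
  have hXi : X * X⁻¹ = 1 := Matrix.mul_nonsing_inv _ hXu
  have hXi' : X⁻¹ * X = 1 := Matrix.nonsing_inv_mul _ hXu
  have hMi : (1 + H * X⁻¹ * Hᵀ) * (U * U)⁻¹ = 1 := by
    rw [← hUsq]; exact Matrix.mul_nonsing_inv _ hM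
  -- The Woodbury-type identity
  have key : (X + Hᵀ * H) * (X⁻¹ - X⁻¹ * Hᵀ * (U * U)⁻¹ * H * X⁻¹) = 1 := by
    have expand : (X + Hᵀ * H) * (X⁻¹ - X⁻¹ * Hᵀ * (U * U)⁻¹ * H * X⁻¹)
        = 1 + Hᵀ * H * X⁻¹
          - Hᵀ * ((1 + H * X⁻¹ * Hᵀ) * (U * U)⁻¹) * (H * X⁻¹) := by
      rw [Matrix.add_mul, Matrix.mul_sub, Matrix.mul_sub]
      rw [show X * (X⁻¹ * Hᵀ * (U * U)⁻¹ * H * X⁻¹)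
          = (X * X⁻¹) * (Hᵀ * (U * U)⁻¹ * H * X⁻¹) by
        simp only [Matrix.mul_assoc]]
      rw [show Hᵀ * H * (X⁻¹ * Hᵀ * (U * U)⁻¹ * H * X⁻¹)
          = Hᵀ * (H * X⁻¹ * Hᵀ * (U * U)⁻¹) * (H * X⁻¹) by
        simp only [Matrix.mul_assoc]]
      rw [hXi, one_mul]
      simp only [Matrix.add_mul, Matrix.mul_add, one_mul, Matrix.mul_assoc]
      abel
    rw [expand, hMi, Matrix.mul_one]
    simp only [Matrix.mul_assoc]
    abel
  have hNdet : IsUnit (X + Hᵀ * H).det := by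
    rw [← hstein]
    simp only [Matrix.det_mul, Matrix.det_transpose]
    exact (hΓu.mul hXu).mul hΓu
  have hNinv : (X + Hᵀ * H)⁻¹ = X⁻¹ - X⁻¹ * Hᵀ * (U * U)⁻¹ * H * X⁻¹ :=
    Matrix.inv_eq_right_inv key
  have hNinv2 : (X + Hᵀ * H)⁻¹ = Γ⁻¹ * X⁻¹ * (Γᵀ)⁻¹ := by
    rw [← hstein, Matrix.mul_inv_rev, Matrix.mul_inv_rev]
    simp only [Matrix.mul_assoc]
  -- rewrite the left-hand side
  have hDU : (D * U)⁻¹ = U⁻¹ * D⁻¹ := Matrix.mul_inv_rev D U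
  have hUUi : U⁻¹ * U⁻¹ = (U * U)⁻¹ := (Matrix.mul_inv_rev U U).symm
  have hUi : U * U⁻¹ = 1 := Matrix.mul_nonsing_inv _ hU
  have lhs_eq : A - (B * U + Γ * X⁻¹ * Hᵀ * U⁻¹) * (D * U)⁻¹ * C
      = Γ - Γ * (X⁻¹ * Hᵀ * (U * U)⁻¹ * H) := by
    rw [hDU]
    rw [show (B * U + Γ * X⁻¹ * Hᵀ * U⁻¹) * (U⁻¹ * D⁻¹) * C
        = B * (U * U⁻¹) * (D⁻¹ * C)
          + Γ * (X⁻¹ * Hᵀ * (U⁻¹ * U⁻¹) * (D⁻¹ * C)) by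
      rw [Matrix.add_mul, Matrix.add_mul]
      simp only [Matrix.mul_assoc]]
    rw [hUi, Matrix.mul_one, hUUi, ← hHdef, hΓdef, hHdef]
    simp only [Matrix.mul_assoc]
    abel
  rw [lhs_eq]
  clear_value Γ H
  have key2 : Γ - Γ * (X⁻¹ * Hᵀ * (U * U)⁻¹ * H)
      = Γ * ((X⁻¹ - X⁻¹ * Hᵀ * (U * U)⁻¹ * H * X⁻¹) * X) := by
    rw [Matrix.sub_mul, hXi', Matrix.mul_sub, Matrix.mul_one]
    simp only [Matrix.mul_assoc, hXi', Matrix.mul_one]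
  rw [key2, ← hNinv, hNinv2]
  have hΓi : Γ * Γ⁻¹ = 1 := Matrix.mul_nonsing_inv _ hΓu
  rw [show Γ * (Γ⁻¹ * X⁻¹ * (Γᵀ)⁻¹ * X) = (Γ * Γ⁻¹) * (X⁻¹ * (Γᵀ)⁻¹ * X) by
    simp only [Matrix.mul_assoc], hΓi, one_mul]
end

section
/- Let X be a symmetric invertible n×n real matrix, Γ an invertible n×n real matrix, and H ∈ ℝ^{p×n}, with Γᵀ X Γ = X + Hᵀ H and I + H X⁻¹ Hᵀ invertible. Then X⁻¹ = Γ X⁻¹ Γᵀ − Γ X⁻¹ Hᵀ (I + H X⁻¹ Hᵀ)⁻¹ H X⁻¹ Γᵀ. -/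
open Matrix

/-- Inverted form of the Stein equation via Sherman–Morrison–Woodbury:
X⁻¹ = Γ X⁻¹ Γᵀ − Γ X⁻¹ Hᵀ (I + H X⁻¹ Hᵀ)⁻¹ H X⁻¹ Γᵀ. -/
theorem stein_inverted (n p : ℕ)
    (Γ X : Matrix (Fin n) (Fin n) ℝ) (H : Matrix (Fin p) (Fin n) ℝ)
    (hX : X.IsSymm) (hXu : IsUnit X.det) (hΓu : IsUnit Γ.det)
    (hstein : Γᵀ * X * Γ = X + Hᵀ * H)
    (hu : IsUnit (1 + H * X⁻¹ * Hᵀ).det) :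
    X⁻¹ = Γ * X⁻¹ * Γᵀ
        - Γ * X⁻¹ * Hᵀ * (1 + H * X⁻¹ * Hᵀ)⁻¹ * H * X⁻¹ * Γᵀ := by
  have hW : (X + Hᵀ * (1 : Matrix (Fin p) (Fin p) ℝ) * H)⁻¹
      = X⁻¹ - X⁻¹ * Hᵀ * ((1:Matrix (Fin p) (Fin p) ℝ)⁻¹ + H * X⁻¹ * Hᵀ)⁻¹ * H * X⁻¹ :=
    add_mul_mul_inv_eq_sub X Hᵀ (1 : Matrix (Fin p) (Fin p) ℝ) H ((isUnit_iff_isUnit_det X).mpr hXu) isUnit_one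
      (by rwa [inv_one, Matrix.isUnit_iff_isUnit_det])
  rw [Matrix.mul_one, inv_one] at hW
  have h2 : (Γᵀ * X * Γ)⁻¹ = Γ⁻¹ * X⁻¹ * Γᵀ⁻¹ := by
    rw [Matrix.mul_inv_rev, Matrix.mul_inv_rev, ← mul_assoc]
  rw [hstein, hW] at h2
  have := congrArg (fun M => Γ * M * Γᵀ) h2
  rw [show Γ * (Γ⁻¹ * X⁻¹ * Γᵀ⁻¹) * Γᵀ = (Γ * Γ⁻¹) * X⁻¹ * (Γᵀ⁻¹ * Γᵀ) by noncomm_ring,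
    Matrix.mul_nonsing_inv _ hΓu, Matrix.nonsing_inv_mul _ (by simpa using hΓu),
    one_mul, mul_one] at this
  conv_lhs => rw [← this]
  noncomm_ring
  simp only [Matrix.mul_assoc]
end

section
/- Let P₀ ∈ ℝ^{N×N} be symmetric invertible, T ∈ ℝ^{N×N} invertible with T⁻¹ P₀ T^{-⊤} = diag(P₁, P₂), and let Π be the orthogonal projector which in the T-basis is Π = diag(I, 0). Then P := (Π P₀⁻¹ Π)⁺ satisfies T⁻¹ P T^{-⊤} = diag(P₁, 0), and moreover I − P₀⁻¹ P = T^{-⊤} diag(0, I) Tᵀ. -/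
open Matrix

/-- B is the Moore–Penrose pseudoinverse of A. -/
def IsMoorePenrose {N : Type*} [Fintype N] [DecidableEq N]
    (A B : Matrix N N ℝ) : Prop :=
  A * B * A = A ∧ B * A * B = B ∧ (A * B)ᵀ = A * B ∧ (B * A)ᵀ = B * A

lemma mp_unique {N : Type*} [Fintype N] [DecidableEq N] {A B C : Matrix N N ℝ}
    (hB : IsMoorePenrose A B) (hC : IsMoorePenrose A C) : B = C := by
  obtain ⟨hB1, hB2, hB3, hB4⟩ := hB
  obtain ⟨hC1, hC2, hC3, hC4⟩ := hC
  have hAB : A * B = A * C := by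
    calc A * B = (A * B)ᵀ := hB3.symm
    _ = Bᵀ * Aᵀ := by rw [transpose_mul]
    _ = Bᵀ * (A * C * A)ᵀ := by rw [hC1]
    _ = (A * B)ᵀ * (A * C)ᵀ := by simp only [transpose_mul, mul_assoc]
    _ = (A * B) * (A * C) := by rw [hB3, hC3]
    _ = (A * B * A) * C := by simp only [mul_assoc]
    _ = A * C := by rw [hB1]
  have hBA : B * A = C * A := by
    calc B * A = (B * A)ᵀ := hB4.symm
    _ = Aᵀ * Bᵀ := by rw [transpose_mul]
    _ = (A * C * A)ᵀ * Bᵀ := by rw [hC1]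
    _ = (C * A)ᵀ * (B * A)ᵀ := by simp only [transpose_mul, mul_assoc]
    _ = (C * A) * (B * A) := by rw [hB4, hC4]
    _ = C * (A * B * A) := by simp only [mul_assoc]
    _ = C * A := by rw [hB1]
  calc B = B * A * B := hB2.symm
  _ = B * (A * C) := by rw [mul_assoc, hAB]
  _ = (C * A) * C := by rw [← mul_assoc, hBA]
  _ = C := hC2

/-- If T⁻¹ P₀ T^{-⊤} = diag(P₁,P₂) and Π is the projector which in the T-basis
is diag(I,0), then P := (Π P₀⁻¹ Π)⁺ satisfies T⁻¹ P T^{-⊤} = diag(P₁,0) and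
I − P₀⁻¹ P = T^{-⊤} diag(0,I) Tᵀ. -/
theorem pseudoinverse_projection_formula (k l : ℕ)
    (P₀ T Pr : Matrix (Fin k ⊕ Fin l) (Fin k ⊕ Fin l) ℝ)
    (P₁ : Matrix (Fin k) (Fin k) ℝ) (P₂ : Matrix (Fin l) (Fin l) ℝ)
    (hP₀ : P₀.IsSymm) (hP₀u : IsUnit P₀.det) (hTu : IsUnit T.det)
    (hP₁u : IsUnit P₁.det) (hP₂u : IsUnit P₂.det)
    (hP₁s : P₁.IsSymm) (hP₂s : P₂.IsSymm)
    (hdiag : T⁻¹ * P₀ * (T⁻¹)ᵀ = Matrix.fromBlocks P₁ 0 0 P₂)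
    (hPr : Pr = T * Matrix.fromBlocks 1 0 0 0 * T⁻¹) (hPrSym : Prᵀ = Pr)
    (P : Matrix (Fin k ⊕ Fin l) (Fin k ⊕ Fin l) ℝ)
    (hP : IsMoorePenrose (Pr * P₀⁻¹ * Pr) P) :
    T⁻¹ * P * (T⁻¹)ᵀ = Matrix.fromBlocks P₁ 0 0 0 ∧
    1 - P₀⁻¹ * P = (T⁻¹)ᵀ * Matrix.fromBlocks 0 0 0 1 * Tᵀ := by
  set D : Matrix (Fin k ⊕ Fin l) (Fin k ⊕ Fin l) ℝ := fromBlocks P₁ 0 0 P₂ with hD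
  set E : Matrix (Fin k ⊕ Fin l) (Fin k ⊕ Fin l) ℝ := fromBlocks 1 0 0 0 with hE
  set F : Matrix (Fin k ⊕ Fin l) (Fin k ⊕ Fin l) ℝ := fromBlocks P₁⁻¹ 0 0 0 with hF
  set G : Matrix (Fin k ⊕ Fin l) (Fin k ⊕ Fin l) ℝ := fromBlocks P₁ 0 0 0 with hG
  have hTT : T * T⁻¹ = 1 := mul_nonsing_inv T hTu
  have hTT' : T⁻¹ * T = 1 := nonsing_inv_mul T hTu
  have hTtu : IsUnit Tᵀ.det := by rwa [det_transpose]
  have htinv : (T⁻¹)ᵀ = (Tᵀ)⁻¹ := transpose_nonsing_inv T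
  have hTtTt : Tᵀ * (T⁻¹)ᵀ = 1 := by rw [htinv]; exact mul_nonsing_inv _ hTtu
  have hTtTt' : (T⁻¹)ᵀ * Tᵀ = 1 := by rw [htinv]; exact nonsing_inv_mul _ hTtu
  have hDinv : D⁻¹ = fromBlocks P₁⁻¹ 0 0 P₂⁻¹ := by
    apply inv_eq_left_inv
    simp [hD, fromBlocks_multiply, nonsing_inv_mul _ hP₁u, nonsing_inv_mul _ hP₂u,
      ← fromBlocks_one]
  have hP0 : P₀ = T * D * Tᵀ := by
    have : T * (T⁻¹ * P₀ * (T⁻¹)ᵀ) * Tᵀ = P₀ := by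
      calc T * (T⁻¹ * P₀ * (T⁻¹)ᵀ) * Tᵀ
          = (T * T⁻¹) * P₀ * ((T⁻¹)ᵀ * Tᵀ) := by simp only [mul_assoc]
        _ = P₀ := by rw [hTT, hTtTt', one_mul, mul_one]
    rw [← this, hdiag]
  have hP0inv : P₀⁻¹ = (T⁻¹)ᵀ * D⁻¹ * T⁻¹ := by
    rw [hP0, Matrix.mul_inv_rev, Matrix.mul_inv_rev, htinv, mul_assoc]
  have hPr' : Pr = (T⁻¹)ᵀ * E * Tᵀ := by
    rw [← hPrSym, hPr]
    simp only [transpose_mul, fromBlocks_transpose, transpose_one, transpose_zero, mul_assoc, hE]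
  have hA : Pr * P₀⁻¹ * Pr = (T⁻¹)ᵀ * F * T⁻¹ := by
    rw [hP0inv]
    nth_rewrite 1 [hPr']
    rw [hPr]
    calc ((T⁻¹)ᵀ * E * Tᵀ) * ((T⁻¹)ᵀ * D⁻¹ * T⁻¹) * (T * E * T⁻¹)
        = (T⁻¹)ᵀ * (E * ((Tᵀ * (T⁻¹)ᵀ) * (D⁻¹ * ((T⁻¹ * T) * (E * T⁻¹))))) := by
          simp only [mul_assoc]
      _ = (T⁻¹)ᵀ * (E * D⁻¹ * E) * T⁻¹ := by rw [hTtTt, hTT', one_mul, one_mul]; simp only [mul_assoc]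
      _ = (T⁻¹)ᵀ * F * T⁻¹ := by
          rw [hDinv]; simp [hE, hF, fromBlocks_multiply]
  have hMP : IsMoorePenrose (Pr * P₀⁻¹ * Pr) (T * G * Tᵀ) := by
    rw [hA]
    have hFG : F * G = E := by simp [hF, hG, hE, fromBlocks_multiply, nonsing_inv_mul _ hP₁u]
    have hGF : G * F = E := by simp [hF, hG, hE, fromBlocks_multiply, mul_nonsing_inv _ hP₁u]
    have hFE : F * E = F := by simp [hF, hE, fromBlocks_multiply]
    have hEF : E * F = F := by simp [hF, hE, fromBlocks_multiply]
    have hGE : G * E = G := by simp [hG, hE, fromBlocks_multiply]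
    have hEG : E * G = G := by simp [hG, hE, fromBlocks_multiply]
    have hAB : ((T⁻¹)ᵀ * F * T⁻¹) * (T * G * Tᵀ) = (T⁻¹)ᵀ * E * Tᵀ := by
      calc ((T⁻¹)ᵀ * F * T⁻¹) * (T * G * Tᵀ)
          = (T⁻¹)ᵀ * (F * ((T⁻¹ * T) * (G * Tᵀ))) := by simp only [mul_assoc]
        _ = (T⁻¹)ᵀ * (F * G) * Tᵀ := by rw [hTT', one_mul]; simp only [mul_assoc]
        _ = (T⁻¹)ᵀ * E * Tᵀ := by rw [hFG]
    have hBA : (T * G * Tᵀ) * ((T⁻¹)ᵀ * F * T⁻¹) = T * E * T⁻¹ := by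
      calc (T * G * Tᵀ) * ((T⁻¹)ᵀ * F * T⁻¹)
          = T * (G * ((Tᵀ * (T⁻¹)ᵀ) * (F * T⁻¹))) := by simp only [mul_assoc]
        _ = T * (G * F) * T⁻¹ := by rw [hTtTt, one_mul]; simp only [mul_assoc]
        _ = T * E * T⁻¹ := by rw [hGF]
    refine ⟨?_, ?_, ?_, ?_⟩
    · rw [hAB]
      calc ((T⁻¹)ᵀ * E * Tᵀ) * ((T⁻¹)ᵀ * F * T⁻¹)
          = (T⁻¹)ᵀ * (E * ((Tᵀ * (T⁻¹)ᵀ) * (F * T⁻¹))) := by simp only [mul_assoc]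
        _ = (T⁻¹)ᵀ * (E * F) * T⁻¹ := by rw [hTtTt, one_mul]; simp only [mul_assoc]
        _ = (T⁻¹)ᵀ * F * T⁻¹ := by rw [hEF]
    · rw [hBA]
      calc (T * E * T⁻¹) * (T * G * Tᵀ)
          = T * (E * ((T⁻¹ * T) * (G * Tᵀ))) := by simp only [mul_assoc]
        _ = T * (E * G) * Tᵀ := by rw [hTT', one_mul]; simp only [mul_assoc]
        _ = T * G * Tᵀ := by rw [hEG]
    · rw [hAB, ← hPr']
      exact hPrSym
    · rw [hBA]
      have : (T * E * T⁻¹)ᵀ = (T⁻¹)ᵀ * E * Tᵀ := by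
        have hEs : Eᵀ = E := by simp [hE, fromBlocks_transpose]
        simp only [transpose_mul, hEs, mul_assoc]
      rw [this, ← hPr', ← hPr]
  have hPB : P = T * G * Tᵀ := mp_unique hP hMP
  constructor
  · rw [hPB]
    calc T⁻¹ * (T * G * Tᵀ) * (T⁻¹)ᵀ
        = (T⁻¹ * T) * (G * (Tᵀ * (T⁻¹)ᵀ)) := by simp only [mul_assoc]
      _ = G := by rw [hTT', hTtTt, one_mul, mul_one]
  · rw [hPB, hP0inv]
    have hDG : D⁻¹ * G = E := by
      rw [hDinv]; simp [hG, hE, fromBlocks_multiply, nonsing_inv_mul _ hP₁u]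
    have : ((T⁻¹)ᵀ * D⁻¹ * T⁻¹) * (T * G * Tᵀ) = (T⁻¹)ᵀ * E * Tᵀ := by
      calc ((T⁻¹)ᵀ * D⁻¹ * T⁻¹) * (T * G * Tᵀ)
          = (T⁻¹)ᵀ * (D⁻¹ * ((T⁻¹ * T) * (G * Tᵀ))) := by simp only [mul_assoc]
        _ = (T⁻¹)ᵀ * (D⁻¹ * G) * Tᵀ := by rw [hTT', one_mul]; simp only [mul_assoc]
        _ = (T⁻¹)ᵀ * E * Tᵀ := by rw [hDG]
    rw [this]
    have h1 : (1 : Matrix (Fin k ⊕ Fin l) (Fin k ⊕ Fin l) ℝ) = (T⁻¹)ᵀ * 1 * Tᵀ := by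
      rw [mul_one, hTtTt']
    rw [h1]
    have : (1 : Matrix (Fin k ⊕ Fin l) (Fin k ⊕ Fin l) ℝ) - E = fromBlocks 0 0 0 1 := by
      ext (i|i) (j|j) <;> simp [hE, fromBlocks, Matrix.one_apply]
    rw [← this]
    noncomm_ring
end

section
/- Let A ∈ ℝ^{n×n}, G ∈ ℝ^{n×m}, H ∈ ℝ^{m×n}, U ∈ ℝ^{m×m} with U invertible, X ∈ ℝ^{n×n} symmetric invertible, and suppose the three relations hold: (i) Aᵀ X A = X + Hᵀ H, (ii) Hᵀ U = Aᵀ X G, (iii) Uᵀ U = I + Gᵀ X G. Then the transfer function T(z) = H(zI − A)⁻¹G + U is all-pass: Tᵀ(1/z) T(z) = I_m as an identity of rational matrix functions. -/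
open Matrix

set_option maxHeartbeats 1000000 in
/-- Discrete-time all-pass realization conditions (Ferrante–Picci, Thm 2.1(3)):
if Aᵀ X A = X + Hᵀ H, Hᵀ U = Aᵀ X G and Uᵀ U = I + Gᵀ X G with X symmetric
invertible, then T(z) = H(zI−A)⁻¹G + U satisfies Tᵀ(1/z) T(z) = I identically. -/
theorem allpass_realization (n m : ℕ)
    (A X : Matrix (Fin n) (Fin n) ℝ) (G : Matrix (Fin n) (Fin m) ℝ)
    (H : Matrix (Fin m) (Fin n) ℝ) (U : Matrix (Fin m) (Fin m) ℝ)
    (hX : X.IsSymm) (hXu : IsUnit X.det) (hUu : IsUnit U.det)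
    (h1 : Aᵀ * X * A = X + Hᵀ * H)
    (h2 : Hᵀ * U = Aᵀ * X * G)
    (h3 : Uᵀ * U = 1 + Gᵀ * X * G) :
    ∀ z : ℝ, z ≠ 0 →
      IsUnit (z • (1 : Matrix (Fin n) (Fin n) ℝ) - A).det →
      IsUnit (z⁻¹ • (1 : Matrix (Fin n) (Fin n) ℝ) - A).det →
      (H * (z⁻¹ • (1 : Matrix (Fin n) (Fin n) ℝ) - A)⁻¹ * G + U)ᵀ *
        (H * (z • (1 : Matrix (Fin n) (Fin n) ℝ) - A)⁻¹ * G + U) = 1 := by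
  intro z hz hz1 hz2
  set B : Matrix (Fin n) (Fin n) ℝ := z • 1 - A with hB
  set D : Matrix (Fin n) (Fin n) ℝ := z⁻¹ • 1 - A with hD
  have hDt : Dᵀ = z⁻¹ • 1 - Aᵀ := by
    simp [hD, transpose_sub, transpose_smul]
  have hBinv : B * B⁻¹ = 1 := mul_nonsing_inv _ hz1
  have hDtdet : IsUnit Dᵀ.det := by rwa [det_transpose]
  have hDtinv : Dᵀ⁻¹ * Dᵀ = 1 := nonsing_inv_mul _ hDtdet
  have hTinv : (D⁻¹)ᵀ = Dᵀ⁻¹ := transpose_nonsing_inv D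
  -- h1 rearranged
  have h1' : Hᵀ * H = Aᵀ * X * A - X := by rw [h1]; abel
  -- transpose of h2
  have h2' : Uᵀ * H = Gᵀ * X * A := by
    have := congrArg Matrix.transpose h2
    simp only [transpose_mul, transpose_transpose, hX.eq] at this
    rw [this]; exact (Matrix.mul_assoc _ _ _).symm
  -- key identity
  have key : Hᵀ * H = -(Aᵀ * X * B) - z • (Dᵀ * X) := by
    rw [h1', hB, hDt]
    rw [Matrix.mul_sub, Matrix.sub_mul, Matrix.mul_smul, Matrix.smul_mul,
      Matrix.mul_one, Matrix.one_mul, smul_sub, smul_smul,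
      mul_inv_cancel₀ hz, one_smul]
    abel
  -- sandwiched key identity
  have key2 : Dᵀ⁻¹ * (Hᵀ * H) * B⁻¹ = -(Dᵀ⁻¹ * (Aᵀ * X)) - z • (X * B⁻¹) := by
    rw [key, Matrix.mul_sub, Matrix.sub_mul]
    congr 1
    · rw [Matrix.mul_neg, Matrix.neg_mul]
      congr 1
      simp only [Matrix.mul_assoc, hBinv, mul_one]
    · rw [Matrix.mul_smul, Matrix.smul_mul]
      congr 1
      rw [← Matrix.mul_assoc Dᵀ⁻¹ Dᵀ X, hDtinv, one_mul]
  -- expand the product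
  have expand : (H * D⁻¹ * G + U)ᵀ * (H * B⁻¹ * G + U)
      = Gᵀ * (Dᵀ⁻¹ * (Hᵀ * H) * B⁻¹) * G
        + Gᵀ * (Dᵀ⁻¹ * (Hᵀ * U)) + (Uᵀ * H) * (B⁻¹ * G) + Uᵀ * U := by
    rw [transpose_add, transpose_mul, transpose_mul, hTinv]
    simp only [Matrix.add_mul, Matrix.mul_add, Matrix.mul_assoc]
    abel
  rw [expand, key2, h2, h2', h3]
  -- abbreviations
  have s1 : Gᵀ * (-(Dᵀ⁻¹ * (Aᵀ * X)) - z • (X * B⁻¹)) * G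
      = -(Gᵀ * (Dᵀ⁻¹ * (Aᵀ * X)) * G) - z • (Gᵀ * (X * B⁻¹) * G) := by
    rw [Matrix.mul_sub, Matrix.sub_mul, Matrix.mul_neg, Matrix.neg_mul,
      Matrix.mul_smul, Matrix.smul_mul]
  have s2 : Gᵀ * (Dᵀ⁻¹ * (Aᵀ * X * G)) = Gᵀ * (Dᵀ⁻¹ * (Aᵀ * X)) * G := by
    simp only [Matrix.mul_assoc]
  have s3 : Gᵀ * X * A * (B⁻¹ * G) - z • (Gᵀ * (X * B⁻¹) * G) = -(Gᵀ * X * G) := by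
    have e1 : Gᵀ * X * A * (B⁻¹ * G) - z • (Gᵀ * (X * B⁻¹) * G)
        = Gᵀ * (X * ((A - z • 1) * B⁻¹)) * G := by
      rw [Matrix.sub_mul, Matrix.smul_mul, Matrix.one_mul, Matrix.mul_sub,
        Matrix.mul_sub, Matrix.sub_mul, Matrix.mul_smul, Matrix.mul_smul,
        Matrix.smul_mul]
      simp only [Matrix.mul_assoc]
    have e2 : (A - z • (1 : Matrix (Fin n) (Fin n) ℝ)) * B⁻¹ = -1 := by
      have hAB : (A - z • (1 : Matrix (Fin n) (Fin n) ℝ)) = -B := by rw [hB]; abel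
      rw [hAB, Matrix.neg_mul, hBinv]
    rw [e1, e2]
    simp only [Matrix.mul_neg, Matrix.mul_one, Matrix.neg_mul, Matrix.mul_assoc]
  rw [s1, s2]
  calc -(Gᵀ * (Dᵀ⁻¹ * (Aᵀ * X)) * G) - z • (Gᵀ * (X * B⁻¹) * G)
        + Gᵀ * (Dᵀ⁻¹ * (Aᵀ * X)) * G + Gᵀ * X * A * (B⁻¹ * G) + (1 + Gᵀ * X * G)
      = (Gᵀ * X * A * (B⁻¹ * G) - z • (Gᵀ * (X * B⁻¹) * G)) + (1 + Gᵀ * X * G) := by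
        abel
    _ = -(Gᵀ * X * G) + (1 + Gᵀ * X * G) := by rw [s3]
    _ = 1 := by abel
end
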